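/- arXiv:2108.02749 — 2 statements merged into one kernel-verified Lean document; each statement's English description precedes it below -/
import Mathlib

section
/- (Fast geometric convergence) Let $(Y_n)_{n\ge0}$ be nonnegative reals satisfying $Y_{n+1} \le C b^n Y_n^{1+\alpha}$ for all $n\ge 0$, where $C>0$, $b>1$, $\alpha>0$. If $Y_0 \le C^{-1/\alpha} b^{-1/\alpha^2}$, then $Y_n \to 0$ as $n\to\infty$; in fact $Y_n \le b^{-n/\alpha} Y_0$ for all $n$. -/
open Filter Real

/-! With `r = b^{-1/α}` the smallness of `Y₀` says `C Y₀^α ≤ r`, and `b r^α = 1`. If `Yₙ ≤ rⁿ Y₀`,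
then `C bⁿ Yₙ^{1+α} ≤ (C Y₀^α) (b r^α)ⁿ rⁿ Y₀ ≤ rⁿ⁺¹ Y₀`, so the bound propagates by induction, and
`rⁿ → 0` since `r < 1`. -/

theorem mul_rpow_le_of_le_div_rpow_inv {C α y s : ℝ} (hC : 0 < C) (hα : 0 < α) (hy : 0 ≤ y)
    (hs : 0 ≤ s) (h : y ≤ (s / C) ^ α⁻¹) : C * y ^ α ≤ s :=
  calc C * y ^ α ≤ C * ((s / C) ^ α⁻¹) ^ α := by gcongr
    _ = s := by rw [rpow_inv_rpow (by positivity) hα.ne', mul_div_cancel₀ _ hC.ne']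

theorem mul_pow_mul_rpow_one_add_eq {C b α r y : ℝ} (hα : 0 ≤ α) (hr : 0 ≤ r) (hy : 0 ≤ y)
    (hbr : b * r ^ α = 1) (n : ℕ) :
    C * b ^ n * (r ^ n * y) ^ (1 + α) = C * y ^ α * (r ^ n * y) := by
  have hbrn : b ^ n * (r ^ n) ^ α = 1 := by
    rw [← rpow_pow_comm hr, ← mul_pow, hbr, one_pow]
  rw [rpow_one_add' (by positivity) (by positivity), mul_rpow (by positivity) hy]
  linear_combination C * y ^ α * (r ^ n * y) * hbrn

theorem le_pow_mul_of_le_mul_pow_mul_rpow_one_add {C b α r : ℝ} {Y : ℕ → ℝ} (hC : 0 ≤ C)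
    (hα : 0 ≤ α) (hr : 0 ≤ r) (hbr : b * r ^ α = 1) (hY : ∀ n, 0 ≤ Y n)
    (hrec : ∀ n : ℕ, Y (n + 1) ≤ C * b ^ n * Y n ^ (1 + α)) (hsmall : C * Y 0 ^ α ≤ r) :
    ∀ n : ℕ, Y n ≤ r ^ n * Y 0 := by
  have hb : 0 ≤ b := by nlinarith [rpow_nonneg hr α]
  intro n
  induction n with
  | zero => simp
  | succ n ih =>
    calc Y (n + 1) ≤ C * b ^ n * Y n ^ (1 + α) := hrec n
      _ ≤ C * b ^ n * (r ^ n * Y 0) ^ (1 + α) := by gcongr; exact hY n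
      _ = C * Y 0 ^ α * (r ^ n * Y 0) := mul_pow_mul_rpow_one_add_eq hα hr (hY 0) hbr n
      _ ≤ r * (r ^ n * Y 0) := by gcongr; exact mul_nonneg (pow_nonneg hr n) (hY 0)
      _ = r ^ (n + 1) * Y 0 := by ring

/-- Fast geometric convergence: if `Y_{n+1} ≤ C bⁿ Y_n^{1+α}` and
`Y₀ ≤ C^{-1/α} b^{-1/α²}`, then `Y_n ≤ b^{-n/α} Y₀` and `Y_n → 0`. -/
theorem fast_geometric_convergence (C b α : ℝ) (hC : 0 < C) (hb : 1 < b) (hα : 0 < α)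
    (Y : ℕ → ℝ) (hY : ∀ n, 0 ≤ Y n)
    (hrec : ∀ n : ℕ, Y (n + 1) ≤ C * b ^ (n : ℝ) * (Y n) ^ (1 + α))
    (hsmall : Y 0 ≤ C ^ (-1 / α) * b ^ (-1 / α ^ 2)) :
    (∀ n : ℕ, Y n ≤ b ^ (-(n : ℝ) / α) * Y 0) ∧
      Tendsto Y atTop (nhds 0) := by
  have hb0 : 0 ≤ b := by positivity
  set r := b ^ (-1 / α)
  have hr0 : 0 ≤ r := rpow_nonneg hb0 _
  have hr1 : r < 1 :=
    rpow_lt_one_of_one_lt_of_neg hb (by rw [neg_div]; exact neg_neg_of_pos (by positivity))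
  have hbr : b * r ^ α = 1 := by
    rw [← rpow_mul hb0, div_mul_cancel₀ _ hα.ne', rpow_neg_one, mul_inv_cancel₀ (by positivity)]
  have hpow : ∀ n : ℕ, b ^ (-(n : ℝ) / α) = r ^ n := fun n => by
    rw [← rpow_mul_natCast hb0]; ring_nf
  have hthreshold : C ^ (-1 / α) * b ^ (-1 / α ^ 2) = (r / C) ^ α⁻¹ := by
    rw [div_rpow hr0 hC.le, ← rpow_mul hb0, neg_div, rpow_neg hC.le, one_div]
    field_simp
  have hbound := le_pow_mul_of_le_mul_pow_mul_rpow_one_add hC.le hα.le hr0 hbr hY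
    (fun n => by simpa only [rpow_natCast] using hrec n)
    (mul_rpow_le_of_le_div_rpow_inv hC hα (hY 0) hr0 (hthreshold ▸ hsmall))
  refine ⟨fun n => hpow n ▸ hbound n, squeeze_zero hY hbound ?_⟩
  simpa using (tendsto_pow_atTop_nhds_zero_of_lt_one hr0 hr1).mul_const (Y 0)
end

section
/- Let $q>0$ and let $u_o\in\mathbb{R}$, $k\in\mathbb{R}$, $\tilde\epsilon\in(0,\tfrac12)$, $\varepsilon\in(0,\tfrac18]$, $\boldsymbol\omega>0$, $\boldsymbol\mu^+$ with $\tfrac14\boldsymbol\omega\le\boldsymbol\mu^+\le 2\boldsymbol\omega$, $k=\boldsymbol\mu^+-\varepsilon\boldsymbol\omega$ and $k_{\tilde\epsilon}=\boldsymbol\mu^+-\tilde\epsilon\varepsilon\boldsymbol\omega$. Then $k\ge\tfrac18\boldsymbol\omega$, $k< k_{\tilde\epsilon}<\boldsymbol\mu^+$, and $\frac{\int_k^{\boldsymbol\mu^+}\tau^{q-1}(\tau-k)\,d\tau}{\int_k^{k_{\tilde\epsilon}}\tau^{q-1}(\tau-k)\,d\tau} \le 1 + \boldsymbol\gamma\tilde\epsilon$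 for a constant $\boldsymbol\gamma$ depending only on $q$. -/
open MeasureTheory

lemma aux_integral (a b c : ℝ) : ∫ x in a..b, c * (x - a) = c * (b - a) ^ 2 / 2 := by
  have h1 : IntervalIntegrable (fun x : ℝ => x) volume a b :=
    (continuous_id.intervalIntegrable a b)
  have h2 : IntervalIntegrable (fun _ : ℝ => a) volume a b := intervalIntegrable_const
  rw [intervalIntegral.integral_const_mul, intervalIntegral.integral_sub h1 h2,
    _root_.integral_id, intervalIntegral.integral_const]
  simp only [smul_eq_mul]
  ring

set_option maxHeartbeats 1000000 in
/-- The key ratio estimate in the propagation of measure theoretical information: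
the ratio of the two integrals is bounded by `1 + γ ε̃` with `γ` depending only on `q`. -/
theorem ratio_integral_estimate (q : ℝ) (hq : 0 < q) :
    ∃ γ : ℝ, 0 < γ ∧
      ∀ ω μ ε ε' : ℝ, 0 < ω → ω / 4 ≤ μ → μ ≤ 2 * ω →
        ε' ∈ Set.Ioo (0:ℝ) (1/2) → ε ∈ Set.Ioc (0:ℝ) (1/8) →
        ω / 8 ≤ μ - ε * ω ∧
        μ - ε * ω < μ - ε' * ε * ω ∧ μ - ε' * ε * ω < μ ∧
        (∫ τ in (μ - ε * ω)..μ, τ ^ (q - 1) * (τ - (μ - ε * ω))) /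
          (∫ τ in (μ - ε * ω)..(μ - ε' * ε * ω), τ ^ (q - 1) * (τ - (μ - ε * ω)))
            ≤ 1 + γ * ε' := by
  set C : ℝ := (16 : ℝ) ^ (q - 1) + (16 : ℝ) ^ (1 - q) with hC
  have hC0 : 0 < C := by
    have := Real.rpow_pos_of_pos (by norm_num : (0:ℝ) < 16) (q - 1)
    have := Real.rpow_pos_of_pos (by norm_num : (0:ℝ) < 16) (1 - q)
    positivity
  refine ⟨8 * C, by positivity, ?_⟩
  intro ω μ ε ε' hω hμ1 hμ2 hε' hε
  obtain ⟨hε'0, hε'2⟩ := hε'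
  obtain ⟨hε0, hε8⟩ := hε
  set k : ℝ := μ - ε * ω with hk
  set kε : ℝ := μ - ε' * ε * ω with hkε
  have hεω : 0 < ε * ω := mul_pos hε0 hω
  have hk8 : ω / 8 ≤ k := by
    have : ε * ω ≤ ω / 8 := by nlinarith
    simp only [hk]; linarith
  have hk0 : 0 < k := lt_of_lt_of_le (by linarith) hk8
  have hkkε : k < kε := by
    have : ε' * ε * ω < ε * ω := by nlinarith
    simp only [hk, hkε]; linarith
  have hkεμ : kε < μ := by
    have : 0 < ε' * ε * ω := by positivity
    simp only [hkε]; linarith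
  refine ⟨hk8, hkkε, hkεμ, ?_⟩
  -- pointwise bounds
  obtain ⟨m0, M0, hm0, hbnd, hMC⟩ :
      ∃ m0 M0 : ℝ, 0 < m0 ∧
        (∀ x ∈ Set.Icc (ω/8) (2*ω), m0 ≤ x ^ (q-1) ∧ x ^ (q-1) ≤ M0) ∧
        M0 ≤ C * m0 := by
    have h8 : (0:ℝ) < ω / 8 := by linarith
    have h16 : (2*ω : ℝ) = 16 * (ω/8) := by ring
    rcases le_total 1 q with hq1 | hq1
    · refine ⟨(ω/8) ^ (q-1), (2*ω) ^ (q-1), Real.rpow_pos_of_pos h8 _, ?_, ?_⟩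
      · intro x hx
        exact ⟨Real.rpow_le_rpow h8.le hx.1 (by linarith),
          Real.rpow_le_rpow (le_trans h8.le hx.1) hx.2 (by linarith)⟩
      · rw [h16, Real.mul_rpow (by norm_num) h8.le]
        have h1 : (0:ℝ) < (16:ℝ) ^ (1-q) := Real.rpow_pos_of_pos (by norm_num) _
        have h2 : (0:ℝ) < (ω/8) ^ (q-1) := Real.rpow_pos_of_pos h8 _
        rw [hC]; nlinarith
    · refine ⟨(2*ω) ^ (q-1), (ω/8) ^ (q-1), Real.rpow_pos_of_pos (by linarith) _, ?_, ?_⟩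
      · intro x hx
        have hx0 : 0 < x := lt_of_lt_of_le h8 hx.1
        exact ⟨Real.rpow_le_rpow_of_nonpos hx0 hx.2 (by linarith),
          Real.rpow_le_rpow_of_nonpos h8 hx.1 (by linarith)⟩
      · have hmul : (16:ℝ) ^ (q-1) * (16:ℝ) ^ (1-q) = 1 := by
          rw [← Real.rpow_add (by norm_num)]; norm_num
        have h2ω : (2*ω) ^ (q-1) = (16:ℝ) ^ (q-1) * (ω/8) ^ (q-1) := by
          rw [h16, Real.mul_rpow (by norm_num) h8.le]
        have h1 : (0:ℝ) < (16:ℝ) ^ (q-1) := Real.rpow_pos_of_pos (by norm_num) _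
        have h1' : (0:ℝ) < (16:ℝ) ^ (1-q) := Real.rpow_pos_of_pos (by norm_num) _
        have h2 : (0:ℝ) < (ω/8) ^ (q-1) := Real.rpow_pos_of_pos h8 _
        have key : (16:ℝ)^(1-q) * ((16:ℝ)^(q-1) * (ω/8)^(q-1)) = (ω/8)^(q-1) := by
          rw [← mul_assoc, mul_comm ((16:ℝ)^(1-q)), hmul, one_mul]
        have sqnn : (0:ℝ) ≤ (16:ℝ)^(q-1) * ((16:ℝ)^(q-1) * (ω/8)^(q-1)) :=
          le_of_lt (mul_pos h1 (mul_pos h1 h2))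
        rw [hC, h2ω]
        nlinarith [key, sqnn]
  have hM0 : 0 < M0 := lt_of_lt_of_le hm0
    (le_trans (hbnd k ⟨hk8, by linarith⟩).1 (hbnd k ⟨hk8, by linarith⟩).2)
  -- continuity / integrability
  have hcont : ContinuousOn (fun τ : ℝ => τ ^ (q-1) * (τ - k)) (Set.Icc k μ) := by
    apply ContinuousOn.mul
    · exact ContinuousOn.rpow_const continuousOn_id
        (fun x hx => Or.inl (ne_of_gt (lt_of_lt_of_le hk0 hx.1)))
    · exact (continuousOn_id.sub continuousOn_const)
  have hint1 : IntervalIntegrable (fun τ : ℝ => τ ^ (q-1) * (τ - k)) volume k kε := by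
    apply (hcont.mono ?_).intervalIntegrable
    rw [Set.uIcc_of_le hkkε.le]
    exact Set.Icc_subset_Icc le_rfl hkεμ.le
  have hint2 : IntervalIntegrable (fun τ : ℝ => τ ^ (q-1) * (τ - k)) volume kε μ := by
    apply (hcont.mono ?_).intervalIntegrable
    rw [Set.uIcc_of_le hkεμ.le]
    exact Set.Icc_subset_Icc hkkε.le le_rfl
  set D : ℝ := ∫ τ in k..kε, τ ^ (q-1) * (τ - k) with hD
  set N : ℝ := ∫ τ in kε..μ, τ ^ (q-1) * (τ - k) with hN
  have hsplit : (∫ τ in k..μ, τ ^ (q-1) * (τ - k)) = D + N :=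
    (intervalIntegral.integral_add_adjacent_intervals hint1 hint2).symm
  have hDlb : m0 * (kε - k) ^ 2 / 2 ≤ D := by
    rw [← aux_integral k kε m0]
    apply intervalIntegral.integral_mono_on hkkε.le
      ((by continuity : Continuous fun x : ℝ => m0 * (x - k)).intervalIntegrable _ _) hint1
    intro x hx
    have hx1 : ω/8 ≤ x := le_trans hk8 hx.1
    have hx2 : x ≤ 2*ω := le_trans hx.2 (by linarith)
    exact mul_le_mul_of_nonneg_right (hbnd x ⟨hx1, hx2⟩).1 (by linarith [hx.1])
  have hD0 : 0 < D :=
    lt_of_lt_of_le (div_pos (mul_pos hm0 (pow_pos (sub_pos.mpr hkkε) 2)) two_pos) hDlb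
  have hNub : N ≤ M0 * (ε * ω) * (μ - kε) := by
    have : N ≤ ∫ _ in kε..μ, M0 * (ε * ω) := by
      apply intervalIntegral.integral_mono_on hkεμ.le hint2 intervalIntegrable_const
      intro x hx
      have hx1 : ω/8 ≤ x := le_trans hk8 (le_trans hkkε.le hx.1)
      have hx2 : x ≤ 2*ω := le_trans hx.2 (by linarith)
      have hxk : 0 ≤ x - k := by
        have := le_trans hkkε.le hx.1; linarith
      have hxε : x - k ≤ ε * ω := by simp only [hk]; linarith [hx.2]
      exact mul_le_mul (hbnd x ⟨hx1, hx2⟩).2 hxε hxk hM0.le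
    rw [intervalIntegral.integral_const, smul_eq_mul] at this
    exact this.trans_eq (by ring)
  have hkey : N ≤ (8 * C) * ε' * D := by
    have hμkε : μ - kε = ε' * ε * ω := by simp only [hkε]; ring
    have hsq : (ε * ω) ^ 2 / 4 ≤ (kε - k) ^ 2 := by
      have h1 : kε - k = (1 - ε') * (ε * ω) := by simp only [hk, hkε]; ring
      have h4 : ε * ω / 2 ≤ (1 - ε') * (ε * ω) := by nlinarith
      calc (ε * ω) ^ 2 / 4 = (ε * ω / 2) ^ 2 := by ring
        _ ≤ ((1 - ε') * (ε * ω)) ^ 2 := pow_le_pow_left₀ (by positivity) h4 2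
        _ = (kε - k) ^ 2 := by rw [h1]
    have h2 : N ≤ C * m0 * (ε * ω) * (ε' * ε * ω) := by
      rw [hμkε] at hNub
      refine hNub.trans ?_
      have := mul_le_mul_of_nonneg_right
        (mul_le_mul_of_nonneg_right hMC hεω.le) (by positivity : (0:ℝ) ≤ ε' * ε * ω)
      linarith
    have h3 : C * m0 * (ε * ω) * (ε' * ε * ω) ≤ (8 * C) * ε' * (m0 * (kε - k) ^ 2 / 2) := by
      have hh := mul_le_mul_of_nonneg_left hsq
        (show (0:ℝ) ≤ 8 * C * ε' * m0 / 2 by positivity)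
      nlinarith [hh]
    have hh2 := mul_le_mul_of_nonneg_left hDlb
      (show (0:ℝ) ≤ 8 * C * ε' by positivity)
    nlinarith [h2, h3, hh2]
  rw [hsplit, div_le_iff₀ hD0]
  nlinarith [hkey, hD0]
end
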